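/- arXiv:1701.08555 — 5 statements merged into one kernel-verified Lean document; each statement's English description precedes it below -/
import Mathlib

section
/- Let M be the numerical monoid generated by m_1 < ... < m_t, and let m : M → ℕ send each element a to its minimum factorization length (the minimum of z_1 + ... + z_t over all (z_1,...,z_t) ∈ ℕ^t with z_1 m_1 + ... + z_t m_t = a). Then for all a ∈ M with a > m_{t-1} m_t, we have m(a + m_t) = m(a) + 1. -/
open Finset

/-!
In a factorization of `b = a + m_t` of minimum length, suppose the largest generator `m_t` does
not occur. Then every part is at most `m_{t-1}`, so `b > m_{t-1} m_t` forces more than `m_t`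
parts. Among more than `m_t` parts, some consecutive block has a sum `c · m_t` divisible by
`m_t`, and `c` is smaller than the block's length because each part is below `m_t`; replacing
the block by `c` copies of `m_t` shortens the factorization. Hence `m_t` occurs, and removing
it gives `m(a) + 1 ≤ m(a + m_t)`; the other inequality is clear.
-/

theorem List.exists_eq_append_append_dvd_sum {α : Type*} (f : α → ℕ) {n : ℕ} (hn : 0 < n)
    {l : List α} (hl : n ≤ l.length) :
    ∃ p q r : List α, l = p ++ q ++ r ∧ q ≠ [] ∧ n ∣ (q.map f).sum := by
  -- pigeonhole on the `n + 1` prefix sums modulo `n`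
  obtain ⟨j, hj, k, hk, hne, hmod⟩ := Finset.exists_ne_map_eq_of_card_lt_of_maps_to
    (s := Finset.range (n + 1)) (t := Finset.range n) (f := fun k ↦ ((l.take k).map f).sum % n)
    (by simp) (fun k _ ↦ by simpa using Nat.mod_lt _ hn)
  wlog hjk : j < k generalizing j k
  · exact this k hk j hj hne.symm hmod.symm (hne.lt_or_gt.resolve_left hjk)
  have hkl : k ≤ l.length := by simp at hk; omega
  have hprefix : l.take k = l.take j ++ (l.take k).drop j := by
    simpa [take_take, min_eq_left hjk.le] using ((l.take k).take_append_drop j).symm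
  refine ⟨l.take j, (l.take k).drop j, l.drop k, ?_, ?_, ?_⟩
  · rw [← hprefix, take_append_drop]
  · simp [drop_eq_nil_iff]; omega
  · have hsum := congrArg (fun l ↦ (l.map f).sum) hprefix
    simp only [map_append, sum_append] at hsum
    simp only [hsum] at hmod
    simpa using (Nat.modEq_iff_dvd' (Nat.le_add_right _ _)).mp hmod

section Factorization

variable {ι : Type*} (m : ι → ℕ)

-- A factorization is recorded as the list of the generator indices it uses, with multiplicity.
def factorizationLengths (b : ℕ) : Set ℕ :=
  {ℓ | ∃ l : List ι, (l.map m).sum = b ∧ l.length = ℓ}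

theorem List.sum_map_eq_sum_count_mul [Fintype ι] [DecidableEq ι] (l : List ι) :
    (l.map m).sum = ∑ i, l.count i * m i := by
  rw [Finset.sum_list_map_count]
  refine Finset.sum_subset (subset_univ _) fun i _ hi ↦ ?_
  simp [List.count_eq_zero_of_not_mem (by simpa using hi)]

theorem List.length_eq_sum_count [Fintype ι] [DecidableEq ι] (l : List ι) :
    l.length = ∑ i, l.count i := by
  simpa using l.sum_map_eq_sum_count_mul fun _ ↦ 1

theorem exists_list_count_eq [Fintype ι] [DecidableEq ι] (z : ι → ℕ) :
    ∃ l : List ι, ∀ i, l.count i = z i := by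
  refine ⟨(∑ i, Multiset.replicate (z i) i).toList, fun i ↦ ?_⟩
  rw [← Multiset.coe_count, Multiset.coe_toList, Multiset.count_sum']
  simp [Multiset.count_replicate]

theorem setOf_sum_mul_eq_factorizationLengths [Fintype ι] (b : ℕ) :
    {ℓ | ∃ z : ι → ℕ, (∑ i, z i * m i = b) ∧ ∑ i, z i = ℓ} = factorizationLengths m b := by
  classical
  ext ℓ
  constructor
  · rintro ⟨z, rfl, rfl⟩
    obtain ⟨l, hl⟩ := exists_list_count_eq z
    exact ⟨l, by simp [l.sum_map_eq_sum_count_mul, hl], by simp [l.length_eq_sum_count, hl]⟩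
  · rintro ⟨l, rfl, rfl⟩
    exact ⟨(l.count ·), (l.sum_map_eq_sum_count_mul m).symm, l.length_eq_sum_count.symm⟩

variable {m}

theorem factorizationLengths_add_nonempty {b : ℕ} (h : (factorizationLengths m b).Nonempty)
    (i : ι) : (factorizationLengths m (b + m i)).Nonempty := by
  obtain ⟨_, l, hl, rfl⟩ := h
  exact ⟨_, i :: l, by simp [hl, add_comm], rfl⟩

theorem sInf_factorizationLengths_add_le {b : ℕ} (h : (factorizationLengths m b).Nonempty)
    (i : ι) : sInf (factorizationLengths m (b + m i)) ≤ sInf (factorizationLengths m b) + 1 := by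
  obtain ⟨l, hl, hlen⟩ := Nat.sInf_mem h
  exact Nat.sInf_le ⟨i :: l, by simp [hl, add_comm], by simp [hlen]⟩

theorem sInf_factorizationLengths_lt_length [DecidableEq ι] {b : ℕ} {i : ι} {l : List ι}
    (hl : (l.map m).sum = b + m i) (hi : i ∈ l) :
    sInf (factorizationLengths m b) < l.length := by
  have hsum := List.sum_map_erase m hi
  have hlen := List.length_erase_add_one hi
  have : sInf (factorizationLengths m b) ≤ (l.erase i).length :=
    Nat.sInf_le ⟨_, by omega, rfl⟩
  omega

theorem exists_shorter_of_forall_lt {T : ι} {l : List ι} (hlt : ∀ i ∈ l, m i < m T)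
    (hlen : m T < l.length) :
    ∃ l' : List ι, (l'.map m).sum = (l.map m).sum ∧ l'.length < l.length := by
  obtain ⟨i, hi⟩ := List.exists_mem_of_length_pos (hlen.trans_le' (Nat.zero_le _))
  obtain ⟨p, q, r, rfl, hq, c, hqc⟩ :=
    l.exists_eq_append_append_dvd_sum m ((Nat.zero_le _).trans_lt (hlt i hi)) hlen.le
  have hc : c < q.length := by
    have := List.sum_lt_sum_of_ne_nil hq m (fun _ ↦ m T) fun i hi ↦ hlt i (by simp [hi])
    simp only [hqc, List.map_const', List.sum_replicate, smul_eq_mul] at this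
    exact Nat.lt_of_mul_lt_mul_right (a := m T) (by linarith)
  refine ⟨p ++ List.replicate c T ++ r, by simp [hqc, mul_comm], ?_⟩
  simp only [List.length_append, List.length_replicate]
  omega

theorem mem_of_forall_length_le {s T : ι} (hle : ∀ i ≠ T, m i ≤ m s) (hsT : m s < m T)
    {l : List ι} (hb : m s * m T < (l.map m).sum)
    (hmin : ∀ l' : List ι, (l'.map m).sum = (l.map m).sum → l.length ≤ l'.length) : T ∈ l := by
  by_contra hT
  have hle' : ∀ i ∈ l, m i ≤ m s := fun i hi ↦ hle i (ne_of_mem_of_not_mem hi hT)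
  have hsum : (l.map m).sum ≤ l.length * m s := by
    simpa using List.sum_le_sum (g := fun _ ↦ m s) hle'
  obtain ⟨l', hl', hlen⟩ := exists_shorter_of_forall_lt (T := T) (l := l)
    (fun i hi ↦ (hle' i hi).trans_lt hsT)
    (Nat.lt_of_mul_lt_mul_left (a := m s) (by linarith))
  exact (hmin l' hl').not_gt hlen

end Factorization

theorem stmt0_general (t : ℕ) (m : Fin (t + 2) → ℕ) (hmono : StrictMono m)
    (a : ℕ) (ha : ∃ z : Fin (t + 2) → ℕ, ∑ i, z i * m i = a)
    (hbig : m (Fin.castSucc (Fin.last t)) * m (Fin.last (t + 1)) < a) :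
    sInf {ℓ | ∃ z : Fin (t + 2) → ℕ, (∑ i, z i * m i = a + m (Fin.last (t + 1))) ∧ ∑ i, z i = ℓ}
      = sInf {ℓ | ∃ z : Fin (t + 2) → ℕ, (∑ i, z i * m i = a) ∧ ∑ i, z i = ℓ} + 1 := by
  have hA : (factorizationLengths m a).Nonempty := by
    obtain ⟨z, hz⟩ := ha
    exact setOf_sum_mul_eq_factorizationLengths m a ▸ ⟨_, z, hz, rfl⟩
  rw [setOf_sum_mul_eq_factorizationLengths, setOf_sum_mul_eq_factorizationLengths]
  obtain ⟨l, hl, hlen⟩ := Nat.sInf_mem (factorizationLengths_add_nonempty hA (Fin.last (t + 1)))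
  have hT : Fin.last (t + 1) ∈ l := by
    refine mem_of_forall_length_le (s := Fin.castSucc (Fin.last t))
      (fun i hi ↦ hmono.monotone ?_) (hmono (Fin.castSucc_lt_last _)) (by rw [hl]; omega)
      (fun l' hl' ↦ hlen ▸ Nat.sInf_le ⟨l', hl'.trans hl, rfl⟩)
    rw [Fin.le_castSucc_iff, Fin.succ_last]
    exact Fin.lt_last_iff_ne_last.mpr hi
  exact le_antisymm (sInf_factorizationLengths_add_le hA _)
    (hlen ▸ sInf_factorizationLengths_lt_length hl hT)

/-- For a numerical monoid generated by `m 0 < m 1 < ... < m (t+1)` (at least two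
generators), the minimum factorization length function satisfies
`minlen (a + m_last) = minlen a + 1` for all `a` in the monoid with
`a > m_{second-to-last} * m_last`. -/
theorem stmt0 (t : ℕ) (m : Fin (t + 2) → ℕ) (hmono : StrictMono m) (hpos : 0 < m 0)
    (a : ℕ) (ha : ∃ z : Fin (t + 2) → ℕ, ∑ i, z i * m i = a)
    (hbig : m (Fin.castSucc (Fin.last t)) * m (Fin.last (t + 1)) < a) :
    sInf {ℓ | ∃ z : Fin (t + 2) → ℕ, (∑ i, z i * m i = a + m (Fin.last (t + 1))) ∧ ∑ i, z i = ℓ}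
      = sInf {ℓ | ∃ z : Fin (t + 2) → ℕ, (∑ i, z i * m i = a) ∧ ∑ i, z i = ℓ} + 1 :=
  stmt0_general t m hmono a ha hbig
end

section
/- Let S = ⟨r_1,...,r_k⟩ with r_1 < ... < r_k, fix a ∈ S and a factorization s = (s_1,...,s_k) of a in S. If |s| ≥ r_k and s_k = 0, then there exists a factorization s' of a in S with |s'| < |s| and s'_k > 0. -/
/-!
Write the factorization `s` as a word of `|s| ≥ r_k` letters. Two of its first `r_k + 1` prefix
sums agree modulo `r_k`, so a nonempty part `c ≤ s` of the factorization has weight `m * r_k`.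
Since `s_k = 0`, every letter of `c` is smaller than `r_k`, hence `m < |c|`, and trading `c` for
`m` copies of `r_k` gives a shorter factorization of `a` that uses `r_k`.
-/

theorem List.exists_sublist_ne_nil_sum_map_eq_zero {α G : Type*} [AddCommGroup G] [Fintype G]
    (f : α → G) (L : List α) (hL : Fintype.card G ≤ L.length) :
    ∃ B, B.Sublist L ∧ B ≠ [] ∧ (B.map f).sum = 0 := by
  obtain ⟨j₁, j₂, hne, hsum⟩ := Fintype.exists_ne_map_eq_of_card_lt
    (fun j : Fin (Fintype.card G + 1) => ((L.take j).map f).sum) (by simp)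
  wlog hlt : (j₁ : ℕ) < j₂ generalizing j₁ j₂
  · exact this j₂ j₁ hne.symm hsum.symm (Fin.val_ne_iff.mpr hne |>.lt_or_gt.resolve_left hlt)
  refine ⟨(L.take j₂).drop j₁, (List.drop_sublist _ _).trans (List.take_sublist _ _), ?_, ?_⟩
  · rw [Ne, List.drop_eq_nil_iff, List.length_take]
    omega
  · have hsplit := List.sum_take_add_sum_drop ((L.take j₂).map f) j₁
    rw [← List.map_take, List.take_take, min_eq_left hlt.le, ← List.map_drop] at hsplit
    rwa [hsum, add_eq_left] at hsplit

theorem Multiset.exists_le_ne_zero_sum_map_eq_zero {α G : Type*} [AddCommGroup G] [Fintype G]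
    (f : α → G) (M : Multiset α) (hM : Fintype.card G ≤ M.card) :
    ∃ N ≤ M, N ≠ 0 ∧ (N.map f).sum = 0 := by
  induction M using Quotient.inductionOn with
  | h L =>
    obtain ⟨B, hBL, hB, hsum⟩ := L.exists_sublist_ne_nil_sum_map_eq_zero f hM
    exact ⟨B, Multiset.coe_le.mpr hBL.subperm, by simpa using hB, by simpa using hsum⟩

theorem Fintype.exists_le_ne_zero_sum_nsmul_eq_zero {ι G : Type*} [Fintype ι] [AddCommGroup G]
    [Fintype G] (f : ι → G) (s : ι → ℕ) (hs : Fintype.card G ≤ ∑ i, s i) :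
    ∃ c ≤ s, c ≠ 0 ∧ ∑ i, c i • f i = 0 := by
  classical
  set M : Multiset ι := ∑ i, Multiset.replicate (s i) i
  have hcount : ∀ j, M.count j = s j := fun j => by
    simp [M, Multiset.count_sum', Multiset.count_replicate]
  obtain ⟨N, hNM, hN, hsum⟩ := M.exists_le_ne_zero_sum_map_eq_zero f (by simpa [M] using hs)
  refine ⟨fun i => N.count i, fun i => hcount i ▸ Multiset.count_le_of_le i hNM, ?_, ?_⟩
  · obtain ⟨i, hi⟩ := Multiset.exists_mem_of_ne_zero hN
    exact fun h => (Multiset.count_pos.mpr hi).ne' (congrFun h i)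
  · rw [← hsum, Finset.sum_multiset_map_count]
    refine (Finset.sum_subset (Finset.subset_univ _) fun i _ hi => ?_).symm
    simp [Multiset.count_eq_zero.mpr (by simpa using hi)]

theorem Fintype.exists_le_ne_zero_dvd_sum_mul {ι : Type*} [Fintype ι] (n : ℕ) [NeZero n]
    (w s : ι → ℕ) (hs : n ≤ ∑ i, s i) : ∃ c ≤ s, c ≠ 0 ∧ n ∣ ∑ i, c i * w i := by
  obtain ⟨c, hcs, hc, hsum⟩ :=
    exists_le_ne_zero_sum_nsmul_eq_zero (fun i => (w i : ZMod n)) s (by simpa using hs)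
  refine ⟨c, hcs, hc, (ZMod.natCast_eq_zero_iff _ _).mp ?_⟩
  simpa [nsmul_eq_mul] using hsum

theorem sum_tsub_add_single_mul {ι : Type*} [Fintype ι] [DecidableEq ι] {s c : ι → ℕ}
    (hc : c ≤ s) (w : ι → ℕ) (j : ι) (m : ℕ) :
    ∑ i, (s - c + Pi.single j m : ι → ℕ) i * w i + ∑ i, c i * w i = ∑ i, s i * w i + m * w j := by
  simp only [Pi.add_apply, Pi.sub_apply, add_mul, Finset.sum_add_distrib]
  rw [add_right_comm, ← Finset.sum_add_distrib]
  simp [← add_mul, tsub_add_cancel_of_le (hc _), Pi.single_apply]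

theorem sum_mul_lt_sum_mul_of_forall_lt {ι : Type*} [Fintype ι] {c w : ι → ℕ} {b : ℕ}
    (hc : c ≠ 0) (hw : ∀ i, c i ≠ 0 → w i < b) : ∑ i, c i * w i < (∑ i, c i) * b := by
  obtain ⟨i, hi⟩ := Function.ne_iff.mp hc
  rw [Finset.sum_mul]
  refine Finset.sum_lt_sum (fun j _ => ?_) ⟨i, Finset.mem_univ _, ?_⟩
  · rcases eq_or_ne (c j) 0 with h | h
    · simp [h]
    · exact Nat.mul_le_mul_left _ (hw j h).le
  · exact Nat.mul_lt_mul_of_pos_left (hw i hi) (Nat.pos_of_ne_zero hi)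

/-- If `s` is a factorization of `a` in `S = ⟨r_1,...,r_k⟩` with `|s| ≥ r_k` and last
coordinate zero, then there is a strictly shorter factorization of `a` with positive
last coordinate. -/
theorem stmt1 (k : ℕ) (r : Fin (k + 1) → ℕ) (hmono : StrictMono r) (hpos : 0 < r 0)
    (a : ℕ) (s : Fin (k + 1) → ℕ) (hfac : ∑ i, s i * r i = a)
    (hlen : r (Fin.last k) ≤ ∑ i, s i) (hlast : s (Fin.last k) = 0) :
    ∃ s' : Fin (k + 1) → ℕ, (∑ i, s' i * r i = a) ∧ (∑ i, s' i) < (∑ i, s i) ∧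
      0 < s' (Fin.last k) := by
  have hr : ∀ i, 0 < r i := fun i => hpos.trans_le (hmono.monotone (Fin.zero_le i))
  have : NeZero (r (Fin.last k)) := ⟨(hr _).ne'⟩
  obtain ⟨c, hcs, hc, m, hm⟩ := Fintype.exists_le_ne_zero_dvd_sum_mul _ r s hlen
  have hclast : c (Fin.last k) = 0 := Nat.le_zero.mp (hlast ▸ hcs _)
  have hmc : m < ∑ i, c i := by
    refine Nat.lt_of_mul_lt_mul_right (a := r (Fin.last k)) ?_
    rw [mul_comm, ← hm]
    exact sum_mul_lt_sum_mul_of_forall_lt hc fun i hi =>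
      hmono (Fin.lt_last_iff_ne_last.mpr fun h => hi (h ▸ hclast))
  have hm0 : 0 < m := by
    obtain ⟨i, hi⟩ := Function.ne_iff.mp hc
    have hpos_sum : 0 < ∑ i, c i * r i := Finset.sum_pos' (fun _ _ => Nat.zero_le _)
      ⟨i, Finset.mem_univ _, Nat.mul_pos (Nat.pos_of_ne_zero hi) (hr i)⟩
    exact Nat.pos_of_mul_pos_left (hm ▸ hpos_sum)
  refine ⟨s - c + Pi.single (Fin.last k) m, ?_, ?_, by simp [hlast, hclast, hm0]⟩
  · have hweight := sum_tsub_add_single_mul hcs r (Fin.last k) m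
    rw [hm, hfac, mul_comm m] at hweight
    omega
  · have hlength := sum_tsub_add_single_mul hcs 1 (Fin.last k) m
    simp only [Pi.one_apply, mul_one] at hlength
    omega
end

section
/- Let S = ⟨r_1,...,r_k⟩ with r_1 < ... < r_k and fix a ∈ S with a > r_{k-1} r_k. If s ∈ ℕ^k is a factorization of a of minimum length among all factorizations of a, then s_k > 0. -/
open Finset

private lemma minsum (S : ℕ → ℕ) (q : ℕ) :
    ∀ n, ∑ j ∈ Finset.range q, min (S j) (n - ∑ i ∈ Finset.range j, S i)
      = min n (∑ j ∈ Finset.range q, S j) := by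
  induction q with
  | zero => simp
  | succ q ih =>
    intro n
    rw [Finset.sum_range_succ, Finset.sum_range_succ S, ih n]
    omega

/-- In `S = ⟨r_1,...,r_k⟩` (at least two generators), if `a > r_{k-1} r_k` and `s` is a
factorization of `a` of minimum length, then the last coordinate of `s` is positive. -/
theorem stmt2 (k : ℕ) (r : Fin (k + 2) → ℕ) (hmono : StrictMono r) (hpos : 0 < r 0)
    (a : ℕ) (ha : r (Fin.castSucc (Fin.last k)) * r (Fin.last (k + 1)) < a)
    (s : Fin (k + 2) → ℕ) (hfac : ∑ i, s i * r i = a)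
    (hmin : ∀ s' : Fin (k + 2) → ℕ, (∑ i, s' i * r i = a) → (∑ i, s i) ≤ ∑ i, s' i) :
    0 < s (Fin.last (k + 1)) := by
  by_contra h0
  push_neg at h0
  replace h0 : s (Fin.last (k + 1)) = 0 := Nat.le_zero.mp h0
  set d := r (Fin.last (k + 1)) with hd
  set c := r (Fin.castSucc (Fin.last k)) with hc
  have hcd : c < d := hmono (by simp [Fin.lt_def])
  have hcpos : 0 < c := lt_of_lt_of_le hpos (hmono.monotone (by simp [Fin.le_def]))
  have hdpos : 0 < d := hcpos.trans hcd
  set S : ℕ → ℕ := fun j => if h : j < k + 2 then s ⟨j, h⟩ else 0 with hSdef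
  set R : ℕ → ℕ := fun j => if h : j < k + 2 then r ⟨j, h⟩ else 0 with hRdef
  have hS : ∀ i : Fin (k + 2), S i.val = s i := by
    intro i; simp [hSdef, i.isLt]
  have hR : ∀ i : Fin (k + 2), R i.val = r i := by
    intro i; simp [hRdef, i.isLt]
  have hRk1 : R (k + 1) = d := by
    have := hR (Fin.last (k + 1)); simpa using this
  have hSk1 : S (k + 1) = 0 := by
    have := hS (Fin.last (k + 1)); simp only [Fin.val_last] at this; omega
  have hRc : ∀ j, j < k + 2 → j ≠ k + 1 → R j ≤ c := by
    intro j hj hj1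
    have : R j = r ⟨j, hj⟩ := by simp [hRdef, hj]
    rw [this, hc]
    exact hmono.monotone (by simp [Fin.le_def]; omega)
  set L := ∑ j ∈ range (k + 2), S j with hL
  have hLs : ∑ i, s i = L := by
    rw [hL, ← Fin.sum_univ_eq_sum_range S (k + 2)]
    exact (Finset.sum_congr rfl fun i _ => (hS i).symm)
  have hfac' : ∑ j ∈ range (k + 2), S j * R j = a := by
    rw [← hfac, ← Fin.sum_univ_eq_sum_range (fun j => S j * R j) (k + 2)]
    exact Finset.sum_congr rfl fun i _ => by rw [hS, hR]
  -- Step 1 : d < L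
  have haL : a ≤ L * c := by
    rw [← hfac', hL, Finset.sum_mul]
    apply Finset.sum_le_sum
    intro j hj
    rw [Finset.mem_range] at hj
    by_cases hj1 : j = k + 1
    · subst hj1; rw [hSk1]; simp
    · exact Nat.mul_le_mul_left _ (hRc j hj hj1)
  have hdL : d < L := by
    have h1 : c * d < c * L := by
      calc c * d < a := ha
        _ ≤ L * c := haL
        _ = c * L := mul_comm _ _
    exact Nat.lt_of_mul_lt_mul_left h1
  -- prefix machinery
  set t : ℕ → ℕ → ℕ := fun n j => min (S j) (n - ∑ i ∈ Finset.range j, S i) with htdef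
  set F : ℕ → ℕ := fun n => ∑ j ∈ range (k + 2), t n j * R j with hFdef
  have hN : ∀ n, ∑ j ∈ range (k + 2), t n j = min n L := fun n => minsum S (k + 2) n
  have main : ∀ u v : ℕ, u ∈ range (d + 1) → v ∈ range (d + 1) → u < v →
      F u % d = F v % d → False := by
    intro u v hu hv hlt hmod
    rw [Finset.mem_range] at hu hv
    have htle : ∀ j, t u j ≤ t v j := by
      intro j
      exact min_le_min (le_refl _) (Nat.sub_le_sub_right hlt.le _)
    set D : ℕ → ℕ := fun j => t v j - t u j with hDdef
    have hDj : ∀ j, t v j = t u j + D j := by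
      intro j; have := htle j; simp only [hDdef]; omega
    set X := ∑ j ∈ range (k + 2), D j * R j with hX
    have hFv : F v = F u + X := by
      rw [hFdef, hX, ← Finset.sum_add_distrib]
      exact Finset.sum_congr rfl fun j _ => by rw [hDj j, add_mul]
    have hNu : ∑ j ∈ range (k + 2), t u j = u := by rw [hN u]; omega
    have hNv : ∑ j ∈ range (k + 2), t v j = v := by rw [hN v]; omega
    have hDsum : ∑ j ∈ range (k + 2), D j = v - u := by
      have : ∑ j ∈ range (k + 2), t v j
          = ∑ j ∈ range (k + 2), t u j + ∑ j ∈ range (k + 2), D j := by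
        rw [← Finset.sum_add_distrib]
        exact Finset.sum_congr rfl fun j _ => hDj j
      omega
    have hdvd : d ∣ X := by
      have h3 : F u ≤ F v := by omega
      have h4 : d ∣ F v - F u := (Nat.modEq_iff_dvd' h3).mp hmod
      have : F v - F u = X := by omega
      rwa [this] at h4
    set m := X / d with hmdef
    have hm : d * m = X := Nat.mul_div_cancel' hdvd
    have hXle : X ≤ (v - u) * c := by
      rw [hX, ← hDsum, Finset.sum_mul]
      apply Finset.sum_le_sum
      intro j hj
      rw [Finset.mem_range] at hj
      by_cases hD0 : D j = 0
      · simp [hD0]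
      · have hj1 : j ≠ k + 1 := by
          intro h; apply hD0
          have h1 : t v j ≤ S j := min_le_left _ _
          have h2 : t u j ≤ S j := min_le_left _ _
          subst h; simp only [hDdef]; omega
        exact Nat.mul_le_mul_left _ (hRc j hj hj1)
    have hmlt : m < v - u := by
      have h5 : d * m < d * (v - u) := by
        calc d * m = X := hm
          _ ≤ (v - u) * c := hXle
          _ < (v - u) * d := by
              have h6 : 0 < v - u := by omega
              exact (mul_lt_mul_iff_right₀ h6).mpr hcd
          _ = d * (v - u) := mul_comm _ _
      exact Nat.lt_of_mul_lt_mul_left h5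
    -- build the shorter factorization
    set w : ℕ → ℕ := fun j => S j - t v j with hwdef
    have hw : ∀ j, S j = t v j + w j := by
      intro j; have : t v j ≤ S j := min_le_left _ _; simp only [hwdef]; omega
    set s' : Fin (k + 2) → ℕ :=
      fun i => w i.val + t u i.val + (if i.val = k + 1 then m else 0) with hs'def
    have hsum_e : ∑ j ∈ range (k + 2), (if j = k + 1 then m else 0) = m := by
      rw [Finset.sum_ite_eq' (range (k + 2)) (k + 1) (fun _ => m)]
      simp
    have hsum_eR : ∑ j ∈ range (k + 2), (if j = k + 1 then m else 0) * R j = m * d := by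
      have : ∀ j, (if j = k + 1 then m else 0) * R j = (if j = k + 1 then m * R j else 0) := by
        intro j; split <;> simp
      rw [Finset.sum_congr rfl fun j _ => this j,
        Finset.sum_ite_eq' (range (k + 2)) (k + 1) (fun j => m * R j)]
      simp [hRk1]
    have hval : ∑ i, s' i * r i = a := by
      have h1 : ∑ i : Fin (k + 2), s' i * r i
          = ∑ j ∈ range (k + 2), (w j + t u j + (if j = k + 1 then m else 0)) * R j := by
        rw [← Fin.sum_univ_eq_sum_range
          (fun j => (w j + t u j + (if j = k + 1 then m else 0)) * R j) (k + 2)]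
        exact Finset.sum_congr rfl fun i _ => by rw [hR]
      have h2 : ∑ j ∈ range (k + 2), (w j + t u j + (if j = k + 1 then m else 0)) * R j
          = ∑ j ∈ range (k + 2), w j * R j + F u + m * d := by
        rw [hFdef]
        rw [← hsum_eR, ← Finset.sum_add_distrib, ← Finset.sum_add_distrib]
        exact Finset.sum_congr rfl fun j _ => by ring
      have h3 : a = ∑ j ∈ range (k + 2), w j * R j + F v := by
        rw [← hfac', hFdef]
        rw [add_comm, ← Finset.sum_add_distrib]
        exact Finset.sum_congr rfl fun j _ => by rw [hw j]; ring
      rw [h1, h2]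
      have hm' : m * d = X := by rw [mul_comm]; exact hm
      omega
    have hlen : ∑ i, s' i + v = L + u + m := by
      have h1 : ∑ i : Fin (k + 2), s' i
          = ∑ j ∈ range (k + 2), (w j + t u j + (if j = k + 1 then m else 0)) := by
        rw [← Fin.sum_univ_eq_sum_range
          (fun j => w j + t u j + (if j = k + 1 then m else 0)) (k + 2)]
      have h2 : ∑ j ∈ range (k + 2), (w j + t u j + (if j = k + 1 then m else 0))
          = (∑ j ∈ range (k + 2), w j) + (∑ j ∈ range (k + 2), t u j)
            + ∑ j ∈ range (k + 2), (if j = k + 1 then m else 0) := by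
        rw [← Finset.sum_add_distrib, ← Finset.sum_add_distrib]
      have h3 : L = ∑ j ∈ range (k + 2), w j + ∑ j ∈ range (k + 2), t v j := by
        rw [hL, ← Finset.sum_add_distrib]
        exact Finset.sum_congr rfl fun j _ => by rw [hw j]; ring
      omega
    have := hmin s' hval
    omega
  obtain ⟨u, hu, v, hv, huv, heq⟩ :=
    Finset.exists_ne_map_eq_of_card_lt_of_maps_to
      (s := range (d + 1)) (t := range d) (f := fun n => F n % d)
      (by simp) (fun n _ => Finset.mem_range.mpr (Nat.mod_lt _ hdpos))
  rcases huv.lt_or_gt with h | h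
  · exact main u v hu hv h heq
  · exact main v u hv hu h heq.symm
end

section
/- Fix r_1 < ... < r_k and n > r_k², and let M_n = ⟨n, n+r_1, ..., n+r_k⟩. For β ∈ M_n, define the factorization graph ∇_β with vertex set Z(β) = {z ∈ ℕ^{k+1} : z_0 n + Σ_{i=1}^k z_i (n + r_i) = β}, two factorizations adjacent when they share a common atom (i.e., there is an index at which both are positive). If β is a Betti element (∇_β disconnected) and z, z' ∈ Z(β) lie in different connected components of ∇_β with |z| > |z'|, then z_0 > 0 and z'_k > 0. -/
open Finset

/-- Length of a factorization. -/
def vlen {m : ℕ} (z : Fin m → ℕ) : ℕ := ∑ i, z i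

/-- Factorization homomorphism of `M_n = ⟨n, n+r_1, ..., n+r_k⟩`. -/
def piM (k n : ℕ) (r : Fin (k + 1) → ℕ) (z : Fin (k + 2) → ℕ) : ℕ :=
  z 0 * n + ∑ i : Fin (k + 1), z i.succ * (n + r i)

/-- Two factorizations of `β` lie in the same connected component of the factorization
graph `∇_β`: there is a path of factorizations of `β`, consecutive ones sharing a
common positive coordinate. -/
def SameComp {m : ℕ} (π : (Fin m → ℕ) → ℕ) (β : ℕ) :
    (Fin m → ℕ) → (Fin m → ℕ) → Prop :=
  Relation.ReflTransGen (fun a b => π a = β ∧ π b = β ∧ ∃ i, 0 < a i ∧ 0 < b i)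

/-- `β` is a Betti element: its factorization graph is disconnected. -/
def IsBetti {m : ℕ} (π : (Fin m → ℕ) → ℕ) (β : ℕ) : Prop :=
  ∃ z z', π z = β ∧ π z' = β ∧ ¬ SameComp π β z z'

/-- The map `Φ_n` on pairs of factorizations. -/
def Phi (k : ℕ) (p : (Fin (k + 2) → ℕ) × (Fin (k + 2) → ℕ)) :
    (Fin (k + 2) → ℕ) × (Fin (k + 2) → ℕ) :=
  if vlen p.2 < vlen p.1 then
    (p.1 + (vlen p.1 - vlen p.2) • Pi.single (0 : Fin (k + 2)) 1,
     p.2 + (vlen p.1 - vlen p.2) • Pi.single (Fin.last (k + 1)) 1)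
  else if vlen p.1 < vlen p.2 then
    (p.1 + (vlen p.2 - vlen p.1) • Pi.single (Fin.last (k + 1)) 1,
     p.2 + (vlen p.2 - vlen p.1) • Pi.single (0 : Fin (k + 2)) 1)
  else p

/-- The congruence generated by a set of relations `ρ`. -/
inductive CongGen {m : ℕ} (ρ : Set ((Fin m → ℕ) × (Fin m → ℕ))) :
    (Fin m → ℕ) → (Fin m → ℕ) → Prop
  | of {z z'} : (z, z') ∈ ρ → CongGen ρ z z'
  | refl (z) : CongGen ρ z z
  | symm {z z'} : CongGen ρ z z' → CongGen ρ z' z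
  | trans {x y z} : CongGen ρ x y → CongGen ρ y z → CongGen ρ x z
  | add {z z'} (u) : CongGen ρ z z' → CongGen ρ (z + u) (z' + u)

/-- `ρ` is a presentation for the monoid with factorization homomorphism `π`. -/
def IsPres {m : ℕ} (π : (Fin m → ℕ) → ℕ)
    (ρ : Set ((Fin m → ℕ) × (Fin m → ℕ))) : Prop :=
  (∀ p ∈ ρ, π p.1 = π p.2) ∧ ∀ z z', CongGen ρ z z' ↔ π z = π z'

/-- `ρ` is a minimal presentation. -/
def IsMinPres {m : ℕ} (π : (Fin m → ℕ) → ℕ)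
    (ρ : Set ((Fin m → ℕ) × (Fin m → ℕ))) : Prop :=
  IsPres π ρ ∧ ∀ ρ' ⊆ ρ, IsPres π ρ' → ρ' = ρ

/-- Primitivity of `M_n`: the gcd of the generators is 1. -/
def Primitive (k n : ℕ) (r : Fin (k + 1) → ℕ) : Prop :=
  Nat.gcd n (Finset.univ.gcd fun i : Fin (k + 1) => n + r i) = 1

/-- Distance between two factorizations. -/
def fdist {m : ℕ} (z z' : Fin m → ℕ) : ℕ :=
  max (∑ i, (z i - min (z i) (z' i))) (∑ i, (z' i - min (z i) (z' i)))

/-!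
Write a factorization `z` of `β` as `β = |z| n + Σ z_i r_i`. Since `|z| > |z'|`, the weight
`Σ z'_i r_i` exceeds `Σ z_i r_i` by at least `n > r_k²`, so `|z'| > r_k`. If `z_0 = 0`, every
atom of `z` has weight at least `1`, while every atom of `z'` has weight at most `r_k`. Walking
along `z` and `z'` one atom at a time, each partial weight of `z` lies less than `r_k` above some
partial weight of `z'`; as `|z| > r_k`, two of these gaps coincide. This yields proper nonzero
subfactorizations `x < z`, `y < z'` of equal weight, and exchanging `x` for `y` (padded with
copies of `n`) gives a factorization of `β` sharing an atom with both `z` and `z'`. The same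
argument with the weights `r_k - r_i`, padding with `n + r_k`, shows `z'_k > 0`.
-/

section Factorizations

variable {m : ℕ}

lemma vlen_eq_dotProduct_one (v : Fin m → ℕ) : vlen v = v ⬝ᵥ 1 :=
  (dotProduct_one v).symm

lemma tsub_dotProduct_add {u v : Fin m → ℕ} (h : v ≤ u) (w : Fin m → ℕ) :
    (u - v) ⬝ᵥ w + v ⬝ᵥ w = u ⬝ᵥ w := by
  rw [← add_dotProduct, tsub_add_cancel_of_le h]

lemma vlen_tsub_add {u v : Fin m → ℕ} (h : v ≤ u) : vlen (u - v) + vlen v = vlen u := by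
  simp only [vlen_eq_dotProduct_one, tsub_dotProduct_add h]

lemma vlen_le_dotProduct {v w : Fin m → ℕ} (h : ∀ i, 0 < v i → 0 < w i) :
    vlen v ≤ v ⬝ᵥ w :=
  Finset.sum_le_sum fun i _ => by
    rcases (v i).eq_zero_or_pos with hi | hi
    · simp [hi]
    · exact Nat.le_mul_of_pos_right _ (h i hi)

lemma dotProduct_le_vlen_mul {v w : Fin m → ℕ} {R : ℕ} (h : ∀ i, 0 < v i → w i ≤ R) :
    v ⬝ᵥ w ≤ vlen v * R := by
  rw [vlen, Finset.sum_mul]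
  refine Finset.sum_le_sum fun i _ => ?_
  rcases (v i).eq_zero_or_pos with hi | hi
  · simp [hi]
  · exact Nat.mul_le_mul_left _ (h i hi)

lemma lt_of_le_of_vlen_lt {u v : Fin m → ℕ} (h : u ≤ v) (hlen : vlen u < vlen v) : u < v :=
  h.lt_of_ne fun huv => hlen.ne (congrArg vlen huv)

lemma lt_of_le_of_dotProduct_lt {u v w : Fin m → ℕ} (h : u ≤ v) (hw : u ⬝ᵥ w < v ⬝ᵥ w) :
    u < v :=
  h.lt_of_ne fun huv => hw.ne (congrArg (· ⬝ᵥ w) huv)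

lemma pos_of_dotProduct_pos {v w : Fin m → ℕ} (h : 0 < v ⬝ᵥ w) : 0 < v :=
  pos_iff_ne_zero.2 fun hv => by simp [hv] at h

end Factorizations

section PrefixTake

variable {m : ℕ}

def prefixSum (x : Fin m → ℕ) (t : ℕ) : ℕ := ∑ j ∈ Finset.univ.filter (·.val < t), x j

/-- The first `c` atoms of `x`, taken in the order of their indices. -/
def prefixTake (x : Fin m → ℕ) (c : ℕ) : Fin m → ℕ :=
  fun i => min (prefixSum x (i + 1)) c - min (prefixSum x i) c

lemma prefixSum_mono (x : Fin m → ℕ) : Monotone (prefixSum x) := fun s t hst =>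
  Finset.sum_le_sum_of_subset fun j => by
    simp only [Finset.mem_filter, Finset.mem_univ, true_and]; omega

lemma prefixSum_succ (x : Fin m → ℕ) (i : Fin m) :
    prefixSum x (i + 1) = prefixSum x i + x i := by
  have : Finset.univ.filter (·.val < i.val + 1)
      = insert i (Finset.univ.filter fun j : Fin m => j.val < i.val) := by
    ext j
    simp only [Finset.mem_filter, Finset.mem_insert, Finset.mem_univ, true_and, Fin.ext_iff]
    omega
  rw [prefixSum, this, Finset.sum_insert (by simp), add_comm, prefixSum]

lemma prefixSum_of_le (x : Fin m → ℕ) {t : ℕ} (ht : m ≤ t) : prefixSum x t = vlen x :=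
  congrArg (∑ j ∈ ·, x j) (Finset.filter_true_of_mem fun j _ => j.isLt.trans_le ht)

lemma prefixSum_zero (x : Fin m → ℕ) : prefixSum x 0 = 0 := by
  simp [prefixSum]

lemma prefixTake_apply (x : Fin m → ℕ) (c : ℕ) (i : Fin m) :
    prefixTake x c i = min (x i) (c - prefixSum x i) := by
  rw [prefixTake, prefixSum_succ]
  omega

lemma prefixTake_zero (x : Fin m → ℕ) : prefixTake x 0 = 0 := by
  funext i
  simp [prefixTake]

lemma prefixTake_le (x : Fin m → ℕ) (c : ℕ) : prefixTake x c ≤ x :=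
  fun i => (prefixTake_apply x c i).trans_le (min_le_left _ _)

lemma prefixTake_mono (x : Fin m → ℕ) : Monotone (prefixTake x) :=
  fun c c' h i => by simp only [prefixTake_apply]; omega

lemma vlen_prefixTake (x : Fin m → ℕ) (c : ℕ) : vlen (prefixTake x c) = min (vlen x) c := by
  have hmono : Monotone fun t => min (prefixSum x t) c :=
    fun s t h => min_le_min_right c (prefixSum_mono x h)
  have htel := Finset.sum_range_tsub hmono m
  rw [← Fin.sum_univ_eq_sum_range (fun t => min (prefixSum x (t + 1)) c - min (prefixSum x t) c),
    prefixSum_of_le x le_rfl, prefixSum_zero, Nat.zero_min, Nat.sub_zero] at htel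
  exact htel

lemma prefixTake_vlen (x : Fin m → ℕ) : prefixTake x (vlen x) = x := by
  funext i
  have : prefixSum x (i + 1) ≤ vlen x := prefixSum_of_le x le_rfl ▸ prefixSum_mono x i.isLt
  rw [prefixTake_apply, prefixSum_succ] at *
  omega

lemma prefixTake_succ_dotProduct_le {x w : Fin m → ℕ} {R : ℕ} (h : ∀ i, 0 < x i → w i ≤ R)
    (c : ℕ) : prefixTake x (c + 1) ⬝ᵥ w ≤ prefixTake x c ⬝ᵥ w + R := by
  have hle := prefixTake_mono x (by omega : c ≤ c + 1)
  have hstep : vlen (prefixTake x (c + 1) - prefixTake x c) ≤ 1 := by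
    have := vlen_tsub_add hle
    rw [vlen_prefixTake, vlen_prefixTake] at this
    omega
  have hR : (prefixTake x (c + 1) - prefixTake x c) ⬝ᵥ w ≤ R := by
    refine (dotProduct_le_vlen_mul fun i hi => h i ?_).trans
      (by simpa using Nat.mul_le_mul_right R hstep)
    exact hi.trans_le (tsub_le_self.trans (prefixTake_le x (c + 1) i))
  rw [← tsub_dotProduct_add hle]
  omega

end PrefixTake

lemma exists_le_lt_add (B : ℕ → ℕ) {R a T : ℕ} (h0 : B 0 ≤ a) (hT : a < B T)
    (hstep : ∀ t, B (t + 1) ≤ B t + R) : ∃ j, B j ≤ a ∧ a < B j + R := by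
  classical
  have hex : ∃ t, a < B t := ⟨T, hT⟩
  obtain ⟨j, hj⟩ : ∃ j, Nat.find hex = j + 1 :=
    Nat.exists_eq_add_one.2 (Nat.pos_of_ne_zero fun h => (Nat.find_spec hex).not_ge (h ▸ h0))
  refine ⟨j, not_lt.1 (Nat.find_min hex (by omega)), ?_⟩
  have := Nat.find_spec hex
  rw [hj] at this
  exact this.trans_le (hstep j)

lemma exists_lt_lt_dotProduct_eq {m : ℕ} {w x y : Fin m → ℕ} {R : ℕ}
    (hx : ∀ i, 0 < x i → 0 < w i) (hy : ∀ i, 0 < y i → w i ≤ R) (hR : R < vlen x)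
    (hxy : x ⬝ᵥ w < y ⬝ᵥ w) :
    ∃ x' y', 0 < x' ∧ x' < x ∧ 0 < y' ∧ y' < y ∧ x' ⬝ᵥ w = y' ⬝ᵥ w := by
  have hw : 0 ≤ w := fun i => Nat.zero_le (w i)
  choose J hJ using fun c => exists_le_lt_add (fun t => prefixTake y t ⬝ᵥ w)
    (a := prefixTake x c ⬝ᵥ w) (T := vlen y) (by simp [prefixTake_zero])
    (by simpa [prefixTake_vlen] using
      (dotProduct_le_dotProduct_of_nonneg_right (prefixTake_le x c) hw).trans_lt hxy)
    (prefixTake_succ_dotProduct_le hy)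
  obtain ⟨c, hc, c', hc', hne, hgap⟩ := Finset.exists_ne_map_eq_of_card_lt_of_maps_to
    (s := Finset.Icc 1 (vlen x)) (t := Finset.range R)
    (f := fun c => prefixTake x c ⬝ᵥ w - prefixTake y (J c) ⬝ᵥ w)
    (by simpa using hR)
    (fun c _ => by have := hJ c; simp only [Finset.coe_range, Set.mem_Iio]; omega)
  wlog hcc' : c < c' generalizing c c'
  · exact this c' hc' c hc hne.symm hgap.symm (by omega)
  simp only [Finset.mem_Icc] at hc hc'
  have hJc := hJ c
  have hJc' := hJ c'
  have hxle := prefixTake_mono x hcc'.le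
  have hx_split := tsub_dotProduct_add hxle w
  have hlenx := vlen_tsub_add hxle
  simp only [vlen_prefixTake] at hlenx
  have hx'_weight : c' - c ≤ (prefixTake x c' - prefixTake x c) ⬝ᵥ w :=
    (by omega : c' - c ≤ vlen (prefixTake x c' - prefixTake x c)).trans <| vlen_le_dotProduct
      fun i hi => hx i (hi.trans_le (tsub_le_self.trans (prefixTake_le x c' i)))
  have hJJ : J c ≤ J c' := by
    by_contra! h
    have := dotProduct_le_dotProduct_of_nonneg_right (prefixTake_mono y h.le) hw
    omega
  have hy_split := tsub_dotProduct_add (prefixTake_mono y hJJ) w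
  have hweq : (prefixTake x c' - prefixTake x c) ⬝ᵥ w
      = (prefixTake y (J c') - prefixTake y (J c)) ⬝ᵥ w := by
    omega
  have hx'x : prefixTake x c' - prefixTake x c ≤ x := tsub_le_self.trans (prefixTake_le x c')
  refine ⟨prefixTake x c' - prefixTake x c, prefixTake y (J c') - prefixTake y (J c),
    pos_of_dotProduct_pos (w := w) (by omega), lt_of_le_of_vlen_lt hx'x (by omega),
    pos_of_dotProduct_pos (w := w) (by omega),
    lt_of_le_of_dotProduct_lt (w := w) (tsub_le_self.trans (prefixTake_le y _)) ?_, hweq⟩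
  rw [← hweq]
  exact (dotProduct_le_dotProduct_of_nonneg_right hx'x hw).trans_lt hxy

section Exchange

variable {m : ℕ} {g : Fin m → ℕ} {β : ℕ}

lemma SameComp.symm {π : (Fin m → ℕ) → ℕ} {z z' : Fin m → ℕ} (h : SameComp π β z z') :
    SameComp π β z' z :=
  Relation.ReflTransGen.mono (fun _ _ ⟨ha, hb, i, hai, hbi⟩ => ⟨hb, ha, i, hbi, hai⟩) _ _
    (Relation.ReflTransGen.swap _ _ h)

/-- `hxy` says that `z - x + y`, padded with `|x| - |y|` copies of atom `j`, is again a
factorization of `β`; it shares an atom with both `z` and `z'`. -/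
lemma sameComp_of_exchange (j : Fin m) {z z' x y : Fin m → ℕ} (hz : z ⬝ᵥ g = β)
    (hz' : z' ⬝ᵥ g = β) (hx0 : 0 < x) (hxz : x < z) (hy0 : 0 < y) (hyz' : y < z')
    (hxy : x ⬝ᵥ g + vlen y * g j = y ⬝ᵥ g + vlen x * g j) :
    SameComp (· ⬝ᵥ g) β z z' := by
  wlog hlen : vlen y ≤ vlen x generalizing z z' x y
  · exact (this hz' hz hy0 hyz' hx0 hxz hxy.symm (by omega)).symm
  set u := z - x + y + Pi.single j (vlen x - vlen y)
  have hu : u ⬝ᵥ g = β := by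
    have hpad : (vlen x - vlen y) * g j + vlen y * g j = vlen x * g j := by
      rw [← add_mul, Nat.sub_add_cancel hlen]
    have := tsub_dotProduct_add hxz.le g
    simp only [u, add_dotProduct, single_dotProduct]
    omega
  obtain ⟨-, i, hi⟩ := Pi.lt_def.1 hxz
  obtain ⟨-, i', hi'⟩ := Pi.lt_def.1 hy0
  have hui : 0 < u i := by
    simp only [u, Pi.add_apply, Pi.sub_apply]
    omega
  have hui' : 0 < u i' := by
    simp only [u, Pi.add_apply]
    exact hi'.trans_le ((Nat.le_add_left _ _).trans (Nat.le_add_right _ _))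
  exact .head ⟨hz, hu, i, by omega, hui⟩
    (.single ⟨hu, hz', i', hui', hi'.trans_le (hyz'.le i')⟩)

lemma dotProduct_eq_vlen_mul_add {g w : Fin m → ℕ} {N : ℕ} (hg : ∀ i, g i = N + w i)
    (v : Fin m → ℕ) : v ⬝ᵥ g = vlen v * N + v ⬝ᵥ w := by
  simp only [dotProduct, vlen, hg, mul_add, Finset.sum_add_distrib, Finset.sum_mul]

lemma dotProduct_add_dotProduct_eq_vlen_mul {g w : Fin m → ℕ} {N : ℕ} (hg : ∀ i, g i + w i = N)
    (v : Fin m → ℕ) : v ⬝ᵥ g + v ⬝ᵥ w = vlen v * N := by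
  simp only [dotProduct, vlen, ← Finset.sum_add_distrib, Finset.sum_mul, ← mul_add, hg]

lemma sameComp_of_dotProduct_lt_of_eq_add {w z z' : Fin m → ℕ} (j : Fin m) {R : ℕ}
    (hg : ∀ i, g i = g j + w i) (hz : z ⬝ᵥ g = β) (hz' : z' ⬝ᵥ g = β)
    (hzw : ∀ i, 0 < z i → 0 < w i) (hz'w : ∀ i, 0 < z' i → w i ≤ R) (hR : R < vlen z)
    (hw : z ⬝ᵥ w < z' ⬝ᵥ w) : SameComp (· ⬝ᵥ g) β z z' := by
  obtain ⟨x, y, hx0, hxz, hy0, hyz', hxy⟩ := exists_lt_lt_dotProduct_eq hzw hz'w hR hw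
  refine sameComp_of_exchange j hz hz' hx0 hxz hy0 hyz' ?_
  rw [dotProduct_eq_vlen_mul_add hg, dotProduct_eq_vlen_mul_add hg, hxy]
  ring

lemma sameComp_of_dotProduct_lt_of_add_eq {w z z' : Fin m → ℕ} (j : Fin m) {R : ℕ}
    (hg : ∀ i, g i + w i = g j) (hz : z ⬝ᵥ g = β) (hz' : z' ⬝ᵥ g = β)
    (hzw : ∀ i, 0 < z i → 0 < w i) (hz'w : ∀ i, 0 < z' i → w i ≤ R) (hR : R < vlen z)
    (hw : z ⬝ᵥ w < z' ⬝ᵥ w) : SameComp (· ⬝ᵥ g) β z z' := by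
  obtain ⟨x, y, hx0, hxz, hy0, hyz', hxy⟩ := exists_lt_lt_dotProduct_eq hzw hz'w hR hw
  refine sameComp_of_exchange j hz hz' hx0 hxz hy0 hyz' ?_
  have := dotProduct_add_dotProduct_eq_vlen_mul hg x
  have := dotProduct_add_dotProduct_eq_vlen_mul hg y
  omega

end Exchange

section Offsets

variable {k n : ℕ} {r : Fin (k + 1) → ℕ}

def offsets (r : Fin (k + 1) → ℕ) : Fin (k + 2) → ℕ := Fin.cons 0 r

def coOffsets (r : Fin (k + 1) → ℕ) : Fin (k + 2) → ℕ := fun i => r (Fin.last k) - offsets r i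

lemma piM_eq_dotProduct (n : ℕ) (r : Fin (k + 1) → ℕ) :
    piM k n r = (· ⬝ᵥ fun i => n + offsets r i) := by
  funext v
  simp [piM, dotProduct, Fin.sum_univ_succ, offsets]

lemma piM_eq_vlen_mul_add (v : Fin (k + 2) → ℕ) :
    piM k n r v = vlen v * n + v ⬝ᵥ offsets r := by
  rw [piM_eq_dotProduct]
  exact dotProduct_eq_vlen_mul_add (fun _ => rfl) v

lemma offsets_zero : offsets r 0 = 0 := rfl

lemma offsets_last : offsets r (Fin.last (k + 1)) = r (Fin.last k) := by
  rw [← Fin.succ_last, offsets, Fin.cons_succ]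

lemma offsets_le_last (hmono : Monotone r) (i : Fin (k + 2)) :
    offsets r i ≤ r (Fin.last k) := by
  cases i using Fin.cases with
  | zero => exact Nat.zero_le _
  | succ j => exact hmono (Fin.le_last j)

lemma offsets_pos (hmono : Monotone r) (hpos : 0 < r 0) {i : Fin (k + 2)} (hi : i ≠ 0) :
    0 < offsets r i := by
  obtain ⟨j, rfl⟩ := Fin.exists_succ_eq.2 hi
  exact hpos.trans_le (hmono (Fin.zero_le j))

lemma coOffsets_pos (hmono : StrictMono r) (hpos : 0 < r 0) {i : Fin (k + 2)}
    (hi : i ≠ Fin.last (k + 1)) : 0 < coOffsets r i := by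
  refine Nat.sub_pos_of_lt ?_
  cases i using Fin.cases with
  | zero => exact hpos.trans_le (hmono.monotone (Fin.zero_le _))
  | succ j =>
    rw [← Fin.succ_last, Ne, Fin.succ_inj] at hi
    exact hmono (Fin.lt_last_iff_ne_last.2 hi)

lemma add_offsets_add_coOffsets (hmono : Monotone r) (n : ℕ) (i : Fin (k + 2)) :
    n + offsets r i + coOffsets r i = n + offsets r (Fin.last (k + 1)) := by
  have := offsets_le_last hmono i
  rw [coOffsets, offsets_last]
  omega

lemma dotProduct_offsets_add_le {z z' : Fin (k + 2) → ℕ} (h : piM k n r z = piM k n r z')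
    (hlen : vlen z' < vlen z) : z ⬝ᵥ offsets r + n ≤ z' ⬝ᵥ offsets r := by
  have := Nat.mul_le_mul_right n (Nat.succ_le_of_lt hlen)
  rw [piM_eq_vlen_mul_add, piM_eq_vlen_mul_add] at h
  rw [Nat.succ_mul] at this
  omega

lemma lt_vlen_of_le_dotProduct_offsets (hmono : Monotone r) (hn : r (Fin.last k) ^ 2 < n)
    {v : Fin (k + 2) → ℕ} (h : n ≤ v ⬝ᵥ offsets r) : r (Fin.last k) < vlen v := by
  have : v ⬝ᵥ offsets r ≤ vlen v * r (Fin.last k) :=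
    dotProduct_le_vlen_mul fun i _ => offsets_le_last hmono i
  exact Nat.lt_of_mul_lt_mul_right (a := r (Fin.last k)) (by nlinarith)

lemma dotProduct_coOffsets_lt (hmono : Monotone r) (hn : 0 < n) {z z' : Fin (k + 2) → ℕ}
    (h : piM k n r z = piM k n r z') (hlen : vlen z' < vlen z) :
    z' ⬝ᵥ coOffsets r < z ⬝ᵥ coOffsets r := by
  have hN := Nat.mul_le_mul_right (n + offsets r (Fin.last (k + 1))) (Nat.succ_le_of_lt hlen)
  have := dotProduct_add_dotProduct_eq_vlen_mul (add_offsets_add_coOffsets hmono n) z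
  have := dotProduct_add_dotProduct_eq_vlen_mul (add_offsets_add_coOffsets hmono n) z'
  simp only [piM_eq_dotProduct] at h
  rw [Nat.succ_mul] at hN
  omega

end Offsets

theorem stmt4_general (k n : ℕ) (r : Fin (k + 1) → ℕ) (hmono : StrictMono r) (hpos : 0 < r 0)
    (hn : r (Fin.last k) ^ 2 < n)
    (β : ℕ)
    (z z' : Fin (k + 2) → ℕ) (hz : piM k n r z = β) (hz' : piM k n r z' = β)
    (hcomp : ¬ SameComp (piM k n r) β z z') (hlen : vlen z' < vlen z) :
    0 < z 0 ∧ 0 < z' (Fin.last (k + 1)) := by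
  have hgap := dotProduct_offsets_add_le (hz.trans hz'.symm) hlen
  have hR := lt_vlen_of_le_dotProduct_offsets hmono.monotone hn (le_of_add_le_right hgap)
  have hco := dotProduct_coOffsets_lt hmono.monotone (by omega) (hz.trans hz'.symm) hlen
  simp only [piM_eq_dotProduct] at hz hz' hcomp
  constructor
  · by_contra! h0
    exact hcomp (sameComp_of_dotProduct_lt_of_eq_add (w := offsets r) 0
      (fun i => by rw [offsets_zero, add_zero]) hz hz'
      (fun i hi => offsets_pos hmono.monotone hpos (by rintro rfl; omega))
      (fun i _ => offsets_le_last hmono.monotone i) (by omega) (by omega))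
  · by_contra! h0
    exact hcomp (sameComp_of_dotProduct_lt_of_add_eq (Fin.last (k + 1))
      (add_offsets_add_coOffsets hmono.monotone n) hz' hz
      (fun i hi => coOffsets_pos hmono hpos (by rintro rfl; omega))
      (fun i _ => Nat.sub_le _ _) hR hco).symm

/-- If `n > r_k²`, `β` is a Betti element of `M_n`, and `z, z'` are factorizations of
`β` in different connected components of `∇_β` with `|z| > |z'|`, then `z_0 > 0` and
`z'_k > 0`. -/
theorem stmt4 (k n : ℕ) (r : Fin (k + 1) → ℕ) (hmono : StrictMono r) (hpos : 0 < r 0)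
    (hn : r (Fin.last k) ^ 2 < n)
    (β : ℕ) (hB : IsBetti (piM k n r) β)
    (z z' : Fin (k + 2) → ℕ) (hz : piM k n r z = β) (hz' : piM k n r z' = β)
    (hcomp : ¬ SameComp (piM k n r) β z z') (hlen : vlen z' < vlen z) :
    0 < z 0 ∧ 0 < z' (Fin.last (k + 1)) :=
  stmt4_general k n r hmono hpos hn β z z' hz hz' hcomp hlen
end

section
/- Fix r_1 < ... < r_k, n > r_k² with M_n primitive, and a minimal presentation ρ ⊆ ker π_n of M_n. Then the set τ = {((z_1,...,z_k), (z'_1,...,z'_k)) : (z,z') ∈ ρ, |z| = |z'|} ⊆ ℕ^k × ℕ^k is a presentation of S = ⟨r_1,...,r_k⟩: the congruence on ℕ^k generated by τ equals ker π, where π(s) = Σ s_i r_i. -/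
open Finset

/-!
Write `π_n(z) = |z| n + π(z_1, …, z_k)`. Because `n > r_k²`, every factorization in `M_n` of
`ℓ n + v` with `ℓ ≤ r_k` and `v ≤ r_k ℓ` has length exactly `ℓ`. So two factorizations `s`, `t`
in `S` of length at most `r_k` and of the same element, padded in the coordinate of `n` to a common
length `ℓ`, are joined by a chain of moves of `ρ` that only uses relations of equal length;
dropping the coordinate of `n` turns it into a chain of moves of `τ`.

Longer factorizations are handled by induction on the element: a factorization of length `> r_j`
contains a subfactorization `c` of length `≤ r_j` with `r_j ∣ π(c)` (prefix sums modulo `r_j`),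
which by induction can be traded for a multiple of `e_j`; two factorizations sharing a generator
reduce to a smaller element.
-/

theorem List.exists_sublist_length_le_dvd_sum {α : Type*} (f : α → ℕ) {d : ℕ} (hd : 0 < d)
    {l : List α} (hl : d ≤ l.length) :
    ∃ u : List α, u.Sublist l ∧ 0 < u.length ∧ u.length ≤ d ∧ d ∣ (u.map f).sum := by
  have : NeZero d := ⟨hd.ne'⟩
  let prefixSum : Fin (d + 1) → ZMod d := fun j => (((l.take j).map f).sum : ℕ)
  obtain ⟨j, j', hne, heq⟩ := Fintype.exists_ne_map_eq_of_card_lt prefixSum (by simp)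
  wlog hlt : j < j' generalizing j j'
  · exact this j' j hne.symm heq.symm (lt_of_le_of_ne (not_lt.mp hlt) hne.symm)
  refine ⟨(l.take j').drop j, (List.drop_sublist _ _).trans (List.take_sublist _ _), ?_, ?_, ?_⟩
  · simp only [List.length_drop, List.length_take]
    omega
  · simp only [List.length_drop, List.length_take]
    omega
  · have hsplit := congrArg (fun u => ((u.map f).sum : ZMod d))
      (List.take_append_drop j (l.take j'))
    simp only [List.take_take, min_eq_left (show (j : ℕ) ≤ j' from hlt.le), List.map_append,
      List.sum_append, Nat.cast_add] at hsplit
    rw [← ZMod.natCast_eq_zero_iff]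
    exact add_eq_left.mp (hsplit.trans heq.symm)

theorem Multiset.exists_le_card_le_dvd_sum {α : Type*} (f : α → ℕ) {d : ℕ} (hd : 0 < d)
    {t : Multiset α} (ht : d ≤ card t) :
    ∃ u ≤ t, 0 < card u ∧ card u ≤ d ∧ d ∣ (u.map f).sum := by
  induction t using Quotient.inductionOn with
  | h l =>
    obtain ⟨u, hul, hu⟩ := l.exists_sublist_length_le_dvd_sum f hd ht
    exact ⟨u, Multiset.coe_le.mpr hul.subperm, hu⟩

section Factorizations

variable {m : ℕ}

theorem vlen_add (a b : Fin m → ℕ) : vlen (a + b) = vlen a + vlen b :=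
  Finset.sum_add_distrib

theorem vlen_pos_iff {a : Fin m → ℕ} : 0 < vlen a ↔ ∃ i, 0 < a i := by
  simp [vlen, Finset.sum_pos_iff]

theorem vlen_cons (x : ℕ) (a : Fin m → ℕ) : vlen (Fin.cons x a : Fin (m + 1) → ℕ) = x + vlen a :=
  Fin.sum_cons x a

theorem vlen_eq_add_vlen_tail (z : Fin (m + 1) → ℕ) : vlen z = z 0 + vlen (Fin.tail z) :=
  Fin.sum_univ_succ z

theorem dotProduct_pos_iff {r a : Fin m → ℕ} (hr : ∀ i, 0 < r i) :
    0 < a ⬝ᵥ r ↔ ∃ i, 0 < a i := by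
  simp [dotProduct, Finset.sum_pos_iff, hr]

theorem dotProduct_le_mul_vlen {r : Fin m → ℕ} {R : ℕ} (hr : ∀ i, r i ≤ R) (a : Fin m → ℕ) :
    a ⬝ᵥ r ≤ R * vlen a := by
  rw [vlen, Finset.mul_sum]
  exact Finset.sum_le_sum fun i _ => by rw [mul_comm R]; exact Nat.mul_le_mul_left _ (hr i)

theorem exists_add_vlen_le_dvd_dotProduct {d : ℕ} (hd : 0 < d) (w a : Fin m → ℕ)
    (ha : d ≤ vlen a) :
    ∃ c e : Fin m → ℕ, a = c + e ∧ 0 < vlen c ∧ vlen c ≤ d ∧ d ∣ c ⬝ᵥ w := by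
  classical
  set t : Multiset (Fin m) := ∑ i, a i • {i}
  have hcount : ∀ i, t.count i = a i := by simp [t, Multiset.count_sum', Multiset.count_singleton]
  obtain ⟨u, hut, hu⟩ := t.exists_le_card_le_dvd_sum w hd (by simpa [t, vlen] using ha)
  have hcard : vlen (fun i => u.count i) = Multiset.card u :=
    Multiset.sum_count_eq_card fun i _ => mem_univ i
  have hsum : (fun i => u.count i) ⬝ᵥ w = (u.map w).sum := by
    rw [Finset.sum_multiset_map_count, dotProduct, ← Finset.sum_subset (subset_univ u.toFinset)]
    · simp
    · intro i _ hi
      simp [Multiset.count_eq_zero_of_notMem (Multiset.mem_toFinset.not.mp hi)]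
  refine ⟨fun i => u.count i, a - fun i => u.count i, ?_, hcard ▸ hsum ▸ hu⟩
  refine (add_tsub_cancel_of_le fun i => ?_).symm
  simpa [hcount] using Multiset.count_le_of_le i hut

end Factorizations

section CongGen

variable {m : ℕ} {ρ : Set ((Fin m → ℕ) × (Fin m → ℕ))} {z z' : Fin m → ℕ}

theorem CongGen.map {m' : ℕ} {ρ' : Set ((Fin m' → ℕ) × (Fin m' → ℕ))}
    (f : (Fin m → ℕ) → Fin m' → ℕ) (hf_add : ∀ a b, f (a + b) = f a + f b)
    (hf : ∀ p ∈ ρ, (f p.1, f p.2) ∈ ρ') (h : CongGen ρ z z') : CongGen ρ' (f z) (f z') := by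
  induction h with
  | of hp => exact .of (hf _ hp)
  | refl => exact .refl _
  | symm _ ih => exact ih.symm
  | trans _ _ ih₁ ih₂ => exact ih₁.trans ih₂
  | add u _ ih => simpa only [hf_add] using ih.add (f u)

theorem CongGen.apply_eq {M : Type*} [Add M] (π : (Fin m → ℕ) → M)
    (hπ : ∀ a b, π (a + b) = π a + π b) (hρ : ∀ p ∈ ρ, π p.1 = π p.2) (h : CongGen ρ z z') :
    π z = π z' := by
  induction h with
  | of hp => exact hρ _ hp
  | refl => rfl
  | symm _ ih => exact ih.symm
  | trans _ _ ih₁ ih₂ => exact ih₁.trans ih₂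
  | add u _ ih => rw [hπ, hπ, ih]

/-- The length hypothesis passes from the fibre of `π (z + u)` to that of `π z` because
`w ↦ w + u` maps the latter into the former. -/
theorem CongGen.of_vlen_eq {M : Type*} [Add M] (π : (Fin m → ℕ) → M)
    (hπ : ∀ a b, π (a + b) = π a + π b) (hρ : ∀ p ∈ ρ, π p.1 = π p.2) (h : CongGen ρ z z')
    (hlen : ∀ w w', π w = π z → π w' = π z → vlen w = vlen w') :
    CongGen {p ∈ ρ | vlen p.1 = vlen p.2} z z' := by
  induction h with
  | of hp => exact .of ⟨hp, hlen _ _ rfl (hρ _ hp).symm⟩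
  | refl => exact .refl _
  | symm h ih => exact (ih fun w w' hw hw' => hlen w w' (hw.trans (h.apply_eq π hπ hρ))
      (hw'.trans (h.apply_eq π hπ hρ))).symm
  | trans h₁ _ ih₁ ih₂ => exact (ih₁ hlen).trans (ih₂ fun w w' hw hw' =>
      hlen w w' (hw.trans (h₁.apply_eq π hπ hρ).symm) (hw'.trans (h₁.apply_eq π hπ hρ).symm))
  | add u _ ih =>
    refine (ih fun w w' hw hw' => ?_).add u
    have := hlen (w + u) (w' + u) (by rw [hπ, hπ, hw]) (by rw [hπ, hπ, hw'])
    rw [vlen_add, vlen_add] at this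
    omega

end CongGen

section Reduction

variable {m : ℕ} {r : Fin m → ℕ} {σ : Set ((Fin m → ℕ) × (Fin m → ℕ))}

theorem exists_eq_add_single_of_pos {a : Fin m → ℕ} {g : Fin m} (h : 0 < a g) :
    ∃ a' : Fin m → ℕ, a = a' + Pi.single g 1 := by
  refine ⟨a - Pi.single g 1, (tsub_add_cancel_of_le fun i => ?_).symm⟩
  rcases eq_or_ne i g with rfl | hi
  · simpa using Nat.one_le_iff_ne_zero.mpr h.ne'
  · simp [hi]

def CongGenBelow (σ : Set ((Fin m → ℕ) × (Fin m → ℕ))) (r : Fin m → ℕ) (v : ℕ) : Prop :=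
  ∀ a b : Fin m → ℕ, a ⬝ᵥ r = b ⬝ᵥ r → a ⬝ᵥ r < v → CongGen σ a b

theorem CongGenBelow.congGen_of_pos {a b : Fin m → ℕ} {g : Fin m} (hr : ∀ i, 0 < r i)
    (hbelow : CongGenBelow σ r (a ⬝ᵥ r)) (hab : a ⬝ᵥ r = b ⬝ᵥ r) (ha : 0 < a g) (hb : 0 < b g) :
    CongGen σ a b := by
  obtain ⟨a, rfl⟩ := exists_eq_add_single_of_pos ha
  obtain ⟨b, rfl⟩ := exists_eq_add_single_of_pos hb
  simp only [add_dotProduct, single_dotProduct, one_mul] at hab hbelow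
  exact (hbelow _ _ (by omega) (by have := hr g; omega)).add _

theorem CongGenBelow.exists_congGen_pos {a : Fin m → ℕ} {j : Fin m} (hr : ∀ i, 0 < r i)
    (hbelow : CongGenBelow σ r (a ⬝ᵥ r)) (hj : r j < vlen a) :
    ∃ a', CongGen σ a a' ∧ a' ⬝ᵥ r = a ⬝ᵥ r ∧ 0 < a' j := by
  obtain ⟨c, e, rfl, hc, hcj, q, hcq⟩ := exists_add_vlen_le_dvd_dotProduct (hr j) r a hj.le
  have he : 0 < e ⬝ᵥ r :=
    (dotProduct_pos_iff hr).2 (vlen_pos_iff.1 (by rw [vlen_add] at hj; omega))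
  have hq : 0 < q := by
    have := (dotProduct_pos_iff hr).2 (vlen_pos_iff.1 hc)
    rw [hcq] at this
    exact Nat.pos_of_mul_pos_left this
  have hc_single : CongGen σ c (Pi.single j q) :=
    hbelow _ _ (by rw [hcq, single_dotProduct, mul_comm]) (by rw [add_dotProduct]; omega)
  refine ⟨Pi.single j q + e, hc_single.add e, ?_, ?_⟩
  · rw [add_dotProduct, add_dotProduct, single_dotProduct, hcq, mul_comm]
  · simpa using Nat.add_pos_left hq _

theorem CongGenBelow.congGen_of_lt_vlen {a b : Fin m → ℕ} {R : ℕ} (hr : ∀ i, 0 < r i)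
    (hrR : ∀ i, r i ≤ R) (hbelow : CongGenBelow σ r (a ⬝ᵥ r)) (hab : a ⬝ᵥ r = b ⬝ᵥ r)
    (ha : R < vlen a) : CongGen σ a b := by
  obtain ⟨j, hj⟩ : ∃ j, 0 < b j :=
    (dotProduct_pos_iff hr).1 (hab ▸ (dotProduct_pos_iff hr).2 (vlen_pos_iff.1 (by omega)))
  obtain ⟨a', haa', ha'r, ha'j⟩ := hbelow.exists_congGen_pos hr ((hrR j).trans_lt ha)
  exact haa'.trans ((ha'r ▸ hbelow).congGen_of_pos hr (ha'r.trans hab) ha'j hj)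

theorem congGenBelow_of_forall_vlen_le {R : ℕ} (hr : ∀ i, 0 < r i) (hrR : ∀ i, r i ≤ R)
    (hshort : ∀ a b, vlen a ≤ R → vlen b ≤ R → a ⬝ᵥ r = b ⬝ᵥ r → CongGen σ a b) :
    ∀ v, CongGenBelow σ r v
  | 0 => fun _ _ _ h => absurd h (Nat.not_lt_zero _)
  | v + 1 => fun a b hab hv => by
    have hbelow : CongGenBelow σ r v := congGenBelow_of_forall_vlen_le hr hrR hshort v
    rcases Nat.lt_succ_iff_lt_or_eq.1 hv with hv | rfl
    · exact hbelow a b hab hv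
    by_cases ha : R < vlen a
    · exact hbelow.congGen_of_lt_vlen hr hrR hab ha
    by_cases hb : R < vlen b
    · exact ((hab ▸ hbelow).congGen_of_lt_vlen hr hrR hab.symm hb).symm
    exact hshort a b (not_lt.1 ha) (not_lt.1 hb) hab

theorem congGen_of_forall_vlen_le {R : ℕ} (hr : ∀ i, 0 < r i) (hrR : ∀ i, r i ≤ R)
    (hshort : ∀ a b, vlen a ≤ R → vlen b ≤ R → a ⬝ᵥ r = b ⬝ᵥ r → CongGen σ a b)
    {a b : Fin m → ℕ} (hab : a ⬝ᵥ r = b ⬝ᵥ r) : CongGen σ a b :=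
  congGenBelow_of_forall_vlen_le hr hrR hshort _ a b hab (Nat.lt_succ_self _)

end Reduction

section Shifted

variable {k n R : ℕ} {r : Fin (k + 1) → ℕ}

theorem piM_eq (z : Fin (k + 2) → ℕ) : piM k n r z = vlen z * n + Fin.tail z ⬝ᵥ r := by
  rw [vlen_eq_add_vlen_tail, piM]
  simp only [vlen, dotProduct, Fin.tail, mul_add, add_mul, Finset.sum_add_distrib, Finset.sum_mul]
  ring

theorem piM_add (z u : Fin (k + 2) → ℕ) : piM k n r (z + u) = piM k n r z + piM k n r u := by
  simp only [piM, Pi.add_apply, add_mul, Finset.sum_add_distrib]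
  ring

/-- A longer factorization overshoots `(ℓ + 1) n`; for a shorter one the part
`Fin.tail w ⬝ᵥ r ≤ R (ℓ - 1) < n` cannot make up the missing `n`. -/
theorem vlen_eq_of_piM_eq (hrR : ∀ i, r i ≤ R) (hn : R ^ 2 < n) {ℓ v : ℕ} (hℓ : ℓ ≤ R)
    (hv : v ≤ R * ℓ) {w : Fin (k + 2) → ℕ} (hw : piM k n r w = ℓ * n + v) : vlen w = ℓ := by
  have htail : Fin.tail w ⬝ᵥ r ≤ R * vlen w := by
    refine (dotProduct_le_mul_vlen hrR _).trans (Nat.mul_le_mul_left _ ?_)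
    rw [vlen_eq_add_vlen_tail w]
    exact Nat.le_add_left _ _
  rw [piM_eq] at hw
  rcases lt_trichotomy (vlen w) ℓ with h | h | h
  · nlinarith
  · exact h
  · nlinarith

def eqLengthTails (ρ : Set ((Fin (k + 2) → ℕ) × (Fin (k + 2) → ℕ))) :
    Set ((Fin (k + 1) → ℕ) × (Fin (k + 1) → ℕ)) :=
  {q | ∃ p ∈ ρ, vlen p.1 = vlen p.2 ∧ q.1 = Fin.tail p.1 ∧ q.2 = Fin.tail p.2}

variable {ρ : Set ((Fin (k + 2) → ℕ) × (Fin (k + 2) → ℕ))}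

theorem dotProduct_eq_of_mem_eqLengthTails (hρ : ∀ p ∈ ρ, piM k n r p.1 = piM k n r p.2)
    {q : (Fin (k + 1) → ℕ) × (Fin (k + 1) → ℕ)} (hq : q ∈ eqLengthTails ρ) :
    q.1 ⬝ᵥ r = q.2 ⬝ᵥ r := by
  obtain ⟨p, hp, hlen, h₁, h₂⟩ := hq
  have := hρ p hp
  rw [piM_eq, piM_eq, hlen] at this
  rw [h₁, h₂]
  omega

theorem congGen_eqLengthTails_of_vlen_le (hrR : ∀ i, r i ≤ R) (hn : R ^ 2 < n)
    (hρ : IsPres (piM k n r) ρ) {a b : Fin (k + 1) → ℕ} (ha : vlen a ≤ R) (hb : vlen b ≤ R)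
    (hab : a ⬝ᵥ r = b ⬝ᵥ r) : CongGen (eqLengthTails ρ) a b := by
  set ℓ := max (vlen a) (vlen b)
  have hlift : ∀ c : Fin (k + 1) → ℕ, vlen c ≤ ℓ →
      piM k n r (Fin.cons (ℓ - vlen c) c) = ℓ * n + c ⬝ᵥ r := fun c hc => by
    rw [piM_eq, vlen_cons, Nat.sub_add_cancel hc, Fin.tail_cons]
  have hliftA := hlift a (le_max_left _ _)
  have hliftB := hlift b (le_max_right _ _)
  have hv : a ⬝ᵥ r ≤ R * ℓ :=
    (dotProduct_le_mul_vlen hrR a).trans (Nat.mul_le_mul_left _ (le_max_left _ _))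
  have hrigid : ∀ w, piM k n r w = ℓ * n + a ⬝ᵥ r → vlen w = ℓ :=
    fun w => vlen_eq_of_piM_eq hrR hn (max_le ha hb) hv
  have hcong : CongGen ρ (Fin.cons (ℓ - vlen a) a) (Fin.cons (ℓ - vlen b) b) :=
    (hρ.2 _ _).2 (by rw [hliftA, hliftB, hab])
  have hcong_eq := hcong.of_vlen_eq _ piM_add hρ.1 fun w w' hw hw' =>
    (hrigid w (hw.trans hliftA)).trans (hrigid w' (hw'.trans hliftA)).symm
  simpa only [Fin.tail_cons] using hcong_eq.map (ρ' := eqLengthTails ρ) Fin.tail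
    (fun _ _ => rfl) fun p hp => ⟨p, hp.1, hp.2, rfl, rfl⟩

end Shifted

theorem stmt11_general (k n : ℕ) (r : Fin (k + 1) → ℕ) (hmono : StrictMono r) (hpos : 0 < r 0)
    (hn : r (Fin.last k) ^ 2 < n)
    (ρ : Set ((Fin (k + 2) → ℕ) × (Fin (k + 2) → ℕ)))
    (hρ : IsMinPres (piM k n r) ρ) :
    ∀ s s' : Fin (k + 1) → ℕ,
      CongGen {q : (Fin (k + 1) → ℕ) × (Fin (k + 1) → ℕ) |
          ∃ p ∈ ρ, vlen p.1 = vlen p.2 ∧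
            q.1 = (fun i => p.1 i.succ) ∧ q.2 = (fun i => p.2 i.succ)} s s' ↔
        ∑ i, s i * r i = ∑ i, s' i * r i := by
  have hr : ∀ i, 0 < r i := fun i => hpos.trans_le (hmono.monotone (Fin.zero_le i))
  have hrR : ∀ i, r i ≤ r (Fin.last k) := fun i => hmono.monotone (Fin.le_last i)
  intro s s'
  constructor
  · exact CongGen.apply_eq (· ⬝ᵥ r) (fun _ _ => add_dotProduct _ _ _)
      fun _ hq => dotProduct_eq_of_mem_eqLengthTails hρ.1.1 hq
  · exact congGen_of_forall_vlen_le hr hrR fun _ _ ha hb =>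
      congGen_eqLengthTails_of_vlen_le hrR hn hρ.1 ha hb

/-- For `n > r_k²` with `M_n` primitive, the equal-length relations of a minimal
presentation of `M_n`, with first coordinates dropped, form a presentation of
`S = ⟨r_1,...,r_k⟩`. -/
theorem stmt11 (k n : ℕ) (r : Fin (k + 1) → ℕ) (hmono : StrictMono r) (hpos : 0 < r 0)
    (hn : r (Fin.last k) ^ 2 < n) (hprim : Primitive k n r)
    (ρ : Set ((Fin (k + 2) → ℕ) × (Fin (k + 2) → ℕ)))
    (hρ : IsMinPres (piM k n r) ρ) :
    ∀ s s' : Fin (k + 1) → ℕ,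
      CongGen {q : (Fin (k + 1) → ℕ) × (Fin (k + 1) → ℕ) |
          ∃ p ∈ ρ, vlen p.1 = vlen p.2 ∧
            q.1 = (fun i => p.1 i.succ) ∧ q.2 = (fun i => p.2 i.succ)} s s' ↔
        ∑ i, s i * r i = ∑ i, s' i * r i :=
  stmt11_general k n r hmono hpos hn ρ hρ
end
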